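/- arXiv:2109.02727 — 3 statements merged into one kernel-verified Lean document; each statement's English description precedes it below -/
import Mathlib

section
/- Let M be a smooth N-manifold with a pre-net, i.e., a direct sum decomposition TM = D₁ ⊕ ⋯ ⊕ D_N into rank-one smooth distributions. If for every pair a ≠ b the distribution D_a ⊕ D_b is involutive (closed under Lie bracket), then for every subset B ⊆ {1,…,N} the distribution ⊕_{b∈B} D_b is involutive. -/
variable {N : ℕ}

/-- Lie bracket of vector fields on `ℝ^N` (identified with functions `ℝ^N → ℝ^N`). -/
noncomputable def lieBracket (X Y : (Fin N → ℝ) → (Fin N → ℝ)) : (Fin N → ℝ) → (Fin N → ℝ) :=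
  fun x => fderiv ℝ Y x (X x) - fderiv ℝ X x (Y x)

/-- `X` is a section of the distribution `Δ`. -/
def IsSectionOf (Δ : (Fin N → ℝ) → Submodule ℝ (Fin N → ℝ))
    (X : (Fin N → ℝ) → (Fin N → ℝ)) : Prop :=
  ∀ x, X x ∈ Δ x

/-- A distribution is involutive if its smooth sections are closed under Lie bracket. -/
def IsInvolutive (Δ : (Fin N → ℝ) → Submodule ℝ (Fin N → ℝ)) : Prop :=
  ∀ X Y : (Fin N → ℝ) → (Fin N → ℝ), ContDiff ℝ (⊤ : ℕ∞) X → ContDiff ℝ (⊤ : ℕ∞) Y →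
    IsSectionOf Δ X → IsSectionOf Δ Y → IsSectionOf Δ (lieBracket X Y)

/-- A pre-net: a decomposition `TM = D₁ ⊕ ⋯ ⊕ D_N` into smooth rank-one distributions. -/
structure IsPreNet (D : Fin N → (Fin N → ℝ) → Submodule ℝ (Fin N → ℝ)) : Prop where
  smooth_rank_one : ∀ a : Fin N, ∃ Va : (Fin N → ℝ) → (Fin N → ℝ),
    ContDiff ℝ (⊤ : ℕ∞) Va ∧ ∀ x, Va x ≠ 0 ∧ D a x = Submodule.span ℝ {Va x}
  indep : ∀ x, iSupIndep (fun a => D a x)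
  spanning : ∀ x, (⨆ a, D a x) = ⊤

open scoped Matrix in
/-- Smoothness of the determinant of a matrix of smooth functions. -/
lemma contDiff_matrix_det {n : ℕ} {E : Type*} [NormedAddCommGroup E] [NormedSpace ℝ E]
    {A : E → Matrix (Fin n) (Fin n) ℝ}
    (h : ∀ i j, ContDiff ℝ (⊤ : ℕ∞) fun x => A x i j) :
    ContDiff ℝ (⊤ : ℕ∞) fun x => (A x).det := by
  simp only [Matrix.det_apply']
  exact ContDiff.sum fun σ _ => contDiff_const.mul (contDiff_prod fun i _ => h (σ i) i)

open scoped Matrix in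
/-- If every pairwise sum `D_a ⊕ D_b` is involutive, then every partial sum
`⨆_{b ∈ B} D_b` is involutive. -/
theorem preNet_pairwise_involutive_imp_all_involutive
    (D : Fin N → (Fin N → ℝ) → Submodule ℝ (Fin N → ℝ)) (hD : IsPreNet D)
    (hpair : ∀ a b : Fin N, a ≠ b → IsInvolutive (fun x => D a x ⊔ D b x)) :
    ∀ B : Finset (Fin N), IsInvolutive (fun x => ⨆ b ∈ B, D b x) := by
  classical
  -- a smooth global frame
  choose V hVsm hV using hD.smooth_rank_one
  have hVne : ∀ a x, V a x ≠ 0 := fun a x => (hV a x).1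
  have hVspan : ∀ a x, D a x = Submodule.span ℝ {V a x} := fun a x => (hV a x).2
  have hli : ∀ x, LinearIndependent ℝ (fun a => V a x) := by
    intro x
    refine (iSupIndep_iff_linearIndependent_of_ne_zero (R := ℝ) (fun a => hVne a x)).mp ?_
    have h1 := hD.indep x
    have h2 : (fun a => D a x) = fun a => (ℝ ∙ V a x) := funext fun a => hVspan a x
    rwa [h2] at h1
  have hsp : ∀ x, Submodule.span ℝ (Set.range fun a => V a x) = ⊤ := by
    intro x
    rw [Submodule.span_range_eq_iSup, ← hD.spanning x]
    exact iSup_congr fun a => (hVspan a x).symm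
  -- the frame matrix
  set M : (Fin N → ℝ) → Matrix (Fin N) (Fin N) ℝ := fun x => Matrix.of fun i a => V a x i
    with hMdef
  have hMsm : ∀ i j, ContDiff ℝ (⊤ : ℕ∞) fun x => M x i j := fun i j => (contDiff_pi.mp (hVsm j)) i
  have hMdet : ∀ x, IsUnit (M x).det := by
    intro x
    have h1 := (Module.Basis.is_basis_iff_det (Pi.basisFun ℝ (Fin N))).mp ⟨hli x, hsp x⟩
    rw [Module.Basis.det_apply] at h1
    have h2 : (Pi.basisFun ℝ (Fin N)).toMatrix (fun a => V a x) = M x := by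
      ext i j
      simp [Module.Basis.toMatrix_apply, hMdef]
    rwa [h2] at h1
  have hMdet0 : ∀ x, (M x).det ≠ 0 := fun x => (hMdet x).ne_zero
  -- coefficients of a vector field with respect to the frame
  set coeff : ((Fin N → ℝ) → (Fin N → ℝ)) → (Fin N → ℝ) → (Fin N → ℝ) :=
    fun Z x => (M x)⁻¹ *ᵥ Z x with hcoeffdef
  have hmulV : ∀ (c : Fin N → ℝ) (x : Fin N → ℝ), M x *ᵥ c = ∑ a, c a • V a x := by
    intro c x
    funext i
    simp [Matrix.mulVec, dotProduct, Finset.sum_apply, mul_comm, hMdef]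
  have hdecomp : ∀ (Z : (Fin N → ℝ) → (Fin N → ℝ)) (x : Fin N → ℝ),
      ∑ a, coeff Z x a • V a x = Z x := by
    intro Z x
    rw [← hmulV]
    rw [hcoeffdef]
    simp only []
    rw [Matrix.mulVec_mulVec, Matrix.mul_nonsing_inv _ (hMdet x), Matrix.one_mulVec]
  -- smoothness of the coefficients
  have hcoeffsm : ∀ Z, ContDiff ℝ (⊤ : ℕ∞) Z → ∀ a, ContDiff ℝ (⊤ : ℕ∞) fun x => coeff Z x a := by
    intro Z hZ a
    have hform : (fun x => coeff Z x a)
        = fun x => ((M x).det)⁻¹ * ∑ j, (M x).adjugate a j * Z x j := by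
      funext x
      rw [hcoeffdef]
      simp [Matrix.inv_def, Matrix.smul_mulVec, Matrix.mulVec, dotProduct,
        Ring.inverse_eq_inv, Finset.mul_sum, mul_assoc]
    rw [hform]
    refine ContDiff.mul ((contDiff_matrix_det hMsm).inv hMdet0) ?_
    refine ContDiff.sum fun j _ => ContDiff.mul ?_ ((contDiff_pi.mp hZ) j)
    have h3 : (fun x => (M x).adjugate a j)
        = fun x => ((M x).updateRow j (Pi.single a 1)).det := by
      funext x; rw [Matrix.adjugate_apply]
    rw [h3]
    refine contDiff_matrix_det ?_
    intro k l
    rcases eq_or_ne k j with rfl | hk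
    · simp only [Matrix.updateRow_self]
      exact contDiff_const
    · simp only [Matrix.updateRow_apply, if_neg hk]
      exact hMsm k l
  -- main argument
  intro B X Y hX hY hXB hYB x
  show fderiv ℝ Y x (X x) - fderiv ℝ X x (Y x) ∈ ⨆ b ∈ B, D b x
  -- coefficients outside B vanish identically, for sections of the partial sum
  have hvanish : ∀ Z, IsSectionOf (fun x => ⨆ b ∈ B, D b x) Z →
      ∀ a, a ∉ B → ∀ y, coeff Z y a = 0 := by
    intro Z hZ a ha y
    have hmem : Z y ∈ ⨆ b ∈ B, D b y := hZ y
    have hrw : (⨆ b ∈ B, D b y)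
        = Submodule.span ℝ (Set.range fun b : B => V (b : Fin N) y) := by
      rw [Submodule.span_range_eq_iSup, iSup_subtype]
      exact iSup_congr fun b => iSup_congr fun hb => hVspan b y
    rw [hrw, Submodule.mem_span_range_iff_exists_fun] at hmem
    obtain ⟨c, hc⟩ := hmem
    set c' : Fin N → ℝ := fun i => if h : i ∈ B then c ⟨i, h⟩ else 0 with hc'def
    have hc'sum : ∑ i, c' i • V i y = Z y := by
      rw [← hc]
      rw [← Finset.sum_subset (Finset.subset_univ B)
        (fun i _ hi => by simp [hc'def, dif_neg hi])]
      rw [← Finset.sum_attach B (fun i => c' i • V i y)]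
      refine Finset.sum_congr rfl fun b _ => ?_
      simp [hc'def, dif_pos b.2]
    have h0 : ∑ i, (coeff Z y i - c' i) • V i y = 0 := by
      simp only [sub_smul, Finset.sum_sub_distrib]
      rw [hdecomp Z y, hc'sum, sub_self]
    have huniq := Fintype.linearIndependent_iff.mp (hli y) _ h0 a
    have : coeff Z y a = c' a := by linarith [huniq]
    rw [this, hc'def]
    exact dif_neg ha
  have hdiffV : ∀ a, Differentiable ℝ (V a) := fun a => (hVsm a).differentiable (by simp)
  have hdiffc : ∀ Z, ContDiff ℝ (⊤ : ℕ∞) Z → ∀ a, Differentiable ℝ fun y => coeff Z y a :=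
    fun Z hZ a => (hcoeffsm Z hZ a).differentiable (by simp)
  -- the derivative of a vector field in terms of the frame
  have hfd : ∀ Z, ContDiff ℝ (⊤ : ℕ∞) Z → ∀ v,
      fderiv ℝ Z x v = ∑ a, (coeff Z x a • fderiv ℝ (V a) x v
        + (fderiv ℝ (fun y => coeff Z y a) x v) • V a x) := by
    intro Z hZ v
    have hZeq : Z = fun y => ∑ a, coeff Z y a • V a y := funext fun y => (hdecomp Z y).symm
    conv_lhs => rw [hZeq]
    rw [fderiv_fun_sum (A := fun a y => coeff Z y a • V a y) fun a _ =>
      ((hdiffc Z hZ a) x).smul ((hdiffV a) x)]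
    rw [ContinuousLinearMap.sum_apply]
    refine Finset.sum_congr rfl fun a _ => ?_
    rw [fderiv_fun_smul ((hdiffc Z hZ a) x) ((hdiffV a) x)]
    simp [ContinuousLinearMap.add_apply, ContinuousLinearMap.smul_apply,
      ContinuousLinearMap.smulRight_apply]
  -- membership facts
  have hle : ∀ b ∈ B, D b x ≤ ⨆ b ∈ B, D b x := fun b hb => le_iSup₂ (f := fun b (_ : b ∈ B) => D b x) b hb
  have hVmem : ∀ b ∈ B, V b x ∈ ⨆ b ∈ B, D b x := by
    intro b hb
    exact hle b hb (by rw [hVspan b x]; exact Submodule.mem_span_singleton_self _)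
  have hbracket : ∀ a ∈ B, ∀ b ∈ B,
      fderiv ℝ (V b) x (V a x) - fderiv ℝ (V a) x (V b x) ∈ ⨆ b ∈ B, D b x := by
    intro a ha b hb
    rcases eq_or_ne a b with rfl | hab
    · simp
    · have hsec1 : IsSectionOf (fun y => D a y ⊔ D b y) (V a) := by
        intro y
        exact le_sup_left (α := Submodule ℝ (Fin N → ℝ))
          (by rw [hVspan a y]; exact Submodule.mem_span_singleton_self _)
      have hsec2 : IsSectionOf (fun y => D a y ⊔ D b y) (V b) := by
        intro y
        exact le_sup_right (α := Submodule ℝ (Fin N → ℝ))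
          (by rw [hVspan b y]; exact Submodule.mem_span_singleton_self _)
      have := hpair a b hab (V a) (V b) (hVsm a) (hVsm b) hsec1 hsec2 x
      have h4 : D a x ⊔ D b x ≤ ⨆ b ∈ B, D b x := sup_le (hle a ha) (hle b hb)
      exact h4 this
  -- the key algebraic identity
  have hXsum : X x = ∑ a, coeff X x a • V a x := (hdecomp X x).symm
  have hYsum : Y x = ∑ a, coeff Y x a • V a x := (hdecomp Y x).symm
  have e1 : ∀ b, fderiv ℝ (V b) x (X x) = ∑ a, coeff X x a • fderiv ℝ (V b) x (V a x) := by
    intro b; conv_lhs => rw [hXsum]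
    rw [map_sum]; simp only [map_smul]
  have e2 : ∀ a, fderiv ℝ (V a) x (Y x) = ∑ b, coeff Y x b • fderiv ℝ (V a) x (V b x) := by
    intro a; conv_lhs => rw [hYsum]
    rw [map_sum]; simp only [map_smul]
  have key : fderiv ℝ Y x (X x) - fderiv ℝ X x (Y x) =
      ((∑ b, (fderiv ℝ (fun y => coeff Y y b) x (X x)) • V b x)
      - ∑ a, (fderiv ℝ (fun y => coeff X y a) x (Y x)) • V a x)
      + ∑ a, ∑ b, (coeff X x a * coeff Y x b) •
          (fderiv ℝ (V b) x (V a x) - fderiv ℝ (V a) x (V b x)) := by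
    rw [hfd Y hY (X x), hfd X hX (Y x)]
    simp only [e1, e2, Finset.smul_sum, smul_smul, smul_sub, Finset.sum_add_distrib,
      Finset.sum_sub_distrib]
    rw [Finset.sum_comm (f := fun b a => (coeff Y x b * coeff X x a) • fderiv ℝ (V b) x (V a x))]
    simp only [mul_comm]
    abel
  rw [key]
  refine Submodule.add_mem _ (Submodule.sub_mem _ ?_ ?_) ?_
  · refine Submodule.sum_mem _ fun b _ => ?_
    by_cases hb : b ∈ B
    · exact Submodule.smul_mem _ _ (hVmem b hb)
    · have hz : (fun y => coeff Y y b) = fun _ => (0 : ℝ) :=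
        funext fun y => hvanish Y hYB b hb y
      rw [hz, fderiv_fun_const]
      simp
  · refine Submodule.sum_mem _ fun a _ => ?_
    by_cases ha : a ∈ B
    · exact Submodule.smul_mem _ _ (hVmem a ha)
    · have hz : (fun y => coeff X y a) = fun _ => (0 : ℝ) :=
        funext fun y => hvanish X hXB a ha y
      rw [hz, fderiv_fun_const]
      simp
  · refine Submodule.sum_mem _ fun a _ => Submodule.sum_mem _ fun b _ => ?_
    by_cases ha : a ∈ B
    · by_cases hb : b ∈ B
      · exact Submodule.smul_mem _ _ (hbracket a ha b hb)
      · rw [hvanish Y hYB b hb x, mul_zero, zero_smul]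
        exact Submodule.zero_mem _
    · rw [hvanish X hXB a ha x, zero_mul, zero_smul]
      exact Submodule.zero_mem _
end

section
/- Let U, λ₁, λ₂, λ₃ be smooth real-valued functions on an open set V ⊆ ℝ³ with λ_a pointwise distinct, and τ : ℝ → ℝ smooth. Suppose for all a ≠ b: ∂_b λ_a = −τ'(U)∂_b U/(λ_b − λ_a) and ∂_b∂_a U = −2τ'(U) ∂_a U ∂_b U/(λ_b − λ_a)². Assume ∂_a U is nowhere zero for each a. If the mixed partials ∂_c∂_b λ_a are symmetric in b and c for all distinct a, b, c, then τ''(U) = 0 on V. -/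
/-- Partial derivative `∂/∂r_a` of a function on `ℝ³`. -/
noncomputable def pd {N : ℕ} {F : Type*} [NormedAddCommGroup F] [NormedSpace ℝ F]
    (a : Fin N) (f : (Fin N → ℝ) → F) (x : Fin N → ℝ) : F :=
  fderiv ℝ f x (Pi.single a 1)

lemma pd_congr {N : ℕ} {f g : (Fin N → ℝ) → ℝ} {x : Fin N → ℝ} (a : Fin N)
    (h : f =ᶠ[nhds x] g) : pd a f x = pd a g x := by
  unfold pd; rw [h.fderiv_eq]

lemma pd_neg {N : ℕ} {f : (Fin N → ℝ) → ℝ} {x : Fin N → ℝ} (a : Fin N) :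
    pd a (fun y => -(f y)) x = -pd a f x := by
  unfold pd; rw [fderiv_fun_neg]; simp

lemma pd_mul {N : ℕ} {f g : (Fin N → ℝ) → ℝ} {x : Fin N → ℝ} (a : Fin N)
    (hf : DifferentiableAt ℝ f x) (hg : DifferentiableAt ℝ g x) :
    pd a (fun y => f y * g y) x = pd a f x * g x + f x * pd a g x := by
  unfold pd; rw [fderiv_fun_mul hf hg]; simp; ring

lemma pd_sub {N : ℕ} {f g : (Fin N → ℝ) → ℝ} {x : Fin N → ℝ} (a : Fin N)
    (hf : DifferentiableAt ℝ f x) (hg : DifferentiableAt ℝ g x) :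
    pd a (fun y => f y - g y) x = pd a f x - pd a g x := by
  unfold pd; rw [fderiv_fun_sub hf hg]; simp

lemma pd_comp {N : ℕ} {f : (Fin N → ℝ) → ℝ} {h : ℝ → ℝ} {x : Fin N → ℝ} (a : Fin N)
    (hh : DifferentiableAt ℝ h (f x)) (hf : DifferentiableAt ℝ f x) :
    pd a (fun y => h (f y)) x = deriv h (f x) * pd a f x := by
  unfold pd
  have e : (fun y => h (f y)) = h ∘ f := rfl
  rw [e, fderiv_comp x hh hf]
  simp only [ContinuousLinearMap.coe_comp', Function.comp_apply]
  set t := fderiv ℝ f x (Pi.single a 1) with ht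
  calc fderiv ℝ h (f x) t = fderiv ℝ h (f x) (t • 1) := by rw [smul_eq_mul, mul_one]
    _ = t • fderiv ℝ h (f x) 1 := (fderiv ℝ h (f x)).map_smul t 1
    _ = deriv h (f x) * t := by rw [fderiv_apply_one_eq_deriv, smul_eq_mul]; ring

lemma pd_div {N : ℕ} {f g : (Fin N → ℝ) → ℝ} {x : Fin N → ℝ} (a : Fin N)
    (hf : DifferentiableAt ℝ f x) (hg : DifferentiableAt ℝ g x) (hgx : g x ≠ 0) :
    pd a (fun y => f y / g y) x = (pd a f x * g x - f x * pd a g x) / g x ^ 2 := by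
  have hinv : pd a (fun y => (g y)⁻¹) x = -(g x ^ 2)⁻¹ * pd a g x := by
    have := pd_comp (h := fun t => t⁻¹) a (differentiableAt_inv hgx) hg
    simpa [deriv_inv] using this
  simp only [div_eq_mul_inv]
  rw [pd_mul (g := fun y => (g y)⁻¹) a hf (hg.inv hgx), hinv]
  field_simp
  ring

lemma contDiff_pd {N : ℕ} {f : (Fin N → ℝ) → ℝ} (a : Fin N) (hf : ContDiff ℝ (⊤ : ℕ∞) f) :
    ContDiff ℝ (⊤ : ℕ∞) (pd a f) :=
  (hf.fderiv_right (by simp)).clm_apply contDiff_const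

lemma mixed_pd
    (V : Set (Fin 3 → ℝ)) (hV : IsOpen V)
    (U : (Fin 3 → ℝ) → ℝ) (lam : Fin 3 → (Fin 3 → ℝ) → ℝ) (τ : ℝ → ℝ)
    (hU : ContDiff ℝ (⊤ : ℕ∞) U) (hlam : ∀ a, ContDiff ℝ (⊤ : ℕ∞) (lam a)) (hτ : ContDiff ℝ (⊤ : ℕ∞) τ)
    (hlamne : ∀ a b, a ≠ b → ∀ x ∈ V, lam a x ≠ lam b x)
    (hsysl : ∀ a b, a ≠ b → ∀ x ∈ V,
      pd b (lam a) x = -(deriv τ (U x)) * pd b U x / (lam b x - lam a x))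
    (hsysU : ∀ a b, a ≠ b → ∀ x ∈ V,
      pd b (pd a U) x = -2 * deriv τ (U x) * pd a U x * pd b U x / (lam b x - lam a x) ^ 2)
    (a b c : Fin 3) (hab : a ≠ b) (hbc : b ≠ c) (hac : a ≠ c)
    (x : Fin 3 → ℝ) (hx : x ∈ V) :
    pd c (pd b (lam a)) x =
      (((-(deriv (deriv τ) (U x) * pd c U x)) * pd b U x +
          -(deriv τ (U x)) * (-2 * deriv τ (U x) * pd b U x * pd c U x / (lam c x - lam b x) ^ 2))
          * (lam b x - lam a x)
        - (-(deriv τ (U x)) * pd b U x) *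
          (-(deriv τ (U x)) * pd c U x / (lam c x - lam b x)
            - -(deriv τ (U x)) * pd c U x / (lam c x - lam a x)))
      / (lam b x - lam a x) ^ 2 := by
  have hτinf : ContDiff ℝ ((⊤ : ℕ∞) : WithTop ℕ∞) τ := hτ.of_le (by simp)
  have hτ' : ContDiff ℝ ((⊤ : ℕ∞) : WithTop ℕ∞) (deriv τ) := by
    simpa using hτinf.iterate_deriv 1
  have h1 : ((⊤ : ℕ∞) : WithTop ℕ∞) ≠ 0 := by simp
  have hdU : ∀ y, DifferentiableAt ℝ U y := fun y => (hU.differentiable (by simp)).differentiableAt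
  have hdpdU : ∀ y, DifferentiableAt ℝ (pd b U) y := fun y =>
    ((contDiff_pd b hU).differentiable (by simp)).differentiableAt
  have hdT : DifferentiableAt ℝ (fun y => deriv τ (U y)) x :=
    ((hτ'.differentiable h1).differentiableAt).comp x (hdU x)
  have hdnT : DifferentiableAt ℝ (fun y => -(deriv τ (U y))) x := hdT.neg
  have hdlam : ∀ i, ∀ y, DifferentiableAt ℝ (lam i) y := fun i y =>
    ((hlam i).differentiable (by simp)).differentiableAt
  have hBA : lam b x - lam a x ≠ 0 := sub_ne_zero.mpr (hlamne b a hab.symm x hx)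
  -- rewrite pd b (lam a) near x
  have hev : pd b (lam a) =ᶠ[nhds x]
      fun y => -(deriv τ (U y)) * pd b U y / (lam b y - lam a y) :=
    Filter.eventuallyEq_of_mem (hV.mem_nhds hx) (fun y hy => hsysl a b hab y hy)
  rw [pd_congr c hev]
  have hdn : DifferentiableAt ℝ (fun y => -(deriv τ (U y)) * pd b U y) x :=
    hdnT.mul (hdpdU x)
  have hdd : DifferentiableAt ℝ (fun y => lam b y - lam a y) x := (hdlam b x).sub (hdlam a x)
  rw [pd_div c hdn hdd hBA]
  rw [pd_mul c hdnT (hdpdU x)]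
  rw [pd_neg (f := fun y => deriv τ (U y)) c]
  rw [pd_comp c ((hτ'.differentiable h1).differentiableAt) (hdU x)]
  rw [pd_sub c (hdlam b x) (hdlam a x)]
  rw [hsysU b c hbc x hx, hsysl b c hbc x hx, hsysl a c hac x hx]

/-- Hydrodynamic integrability of the generalized dKP equation forces `τ'' = 0`:
given the reduced first-order system for `U, λ₁, λ₂, λ₃` and symmetry of the mixed
partials `∂_c∂_b λ_a` in `b, c`, one has `τ''(U) = 0`. -/
theorem gdKP_integrability_forces_tau_affine
    (V : Set (Fin 3 → ℝ)) (hV : IsOpen V)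
    (U : (Fin 3 → ℝ) → ℝ) (lam : Fin 3 → (Fin 3 → ℝ) → ℝ) (τ : ℝ → ℝ)
    (hU : ContDiff ℝ (⊤ : ℕ∞) U) (hlam : ∀ a, ContDiff ℝ (⊤ : ℕ∞) (lam a)) (hτ : ContDiff ℝ (⊤ : ℕ∞) τ)
    (hlamne : ∀ a b, a ≠ b → ∀ x ∈ V, lam a x ≠ lam b x)
    (hUne : ∀ a, ∀ x ∈ V, pd a U x ≠ 0)
    (hsysl : ∀ a b, a ≠ b → ∀ x ∈ V,
      pd b (lam a) x = -(deriv τ (U x)) * pd b U x / (lam b x - lam a x))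
    (hsysU : ∀ a b, a ≠ b → ∀ x ∈ V,
      pd b (pd a U) x = -2 * deriv τ (U x) * pd a U x * pd b U x / (lam b x - lam a x) ^ 2)
    (hsym : ∀ a b c : Fin 3, a ≠ b → b ≠ c → a ≠ c → ∀ x ∈ V,
      pd c (pd b (lam a)) x = pd b (pd c (lam a)) x) :
    ∀ x ∈ V, deriv (deriv τ) (U x) = 0 := by
  intro x hx
  have H1 := mixed_pd V hV U lam τ hU hlam hτ hlamne hsysl hsysU 0 1 2
    (by decide) (by decide) (by decide) x hx
  have H2 := mixed_pd V hV U lam τ hU hlam hτ hlamne hsysl hsysU 0 2 1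
    (by decide) (by decide) (by decide) x hx
  have hs := hsym 0 1 2 (by decide) (by decide) (by decide) x hx
  have heq := (H1.symm.trans hs).trans H2
  set S := deriv (deriv τ) (U x) with hS
  set T := deriv τ (U x) with hT
  set pb := pd 1 U x with hpb'
  set pc := pd 2 U x with hpc'
  set A := lam 0 x with hA
  set B := lam 1 x with hB
  set C := lam 2 x with hC
  have hBA : B - A ≠ 0 := sub_ne_zero.mpr (hlamne 1 0 (by decide) x hx)
  have hCA : C - A ≠ 0 := sub_ne_zero.mpr (hlamne 2 0 (by decide) x hx)
  have hCB : C - B ≠ 0 := sub_ne_zero.mpr (hlamne 2 1 (by decide) x hx)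
  have hBC : B - C ≠ 0 := sub_ne_zero.mpr (hlamne 1 2 (by decide) x hx)
  have hpb : pb ≠ 0 := hUne 1 x hx
  have hpc : pc ≠ 0 := hUne 2 x hx
  have h0 : ((-(S * pc) * pb + -T * (-2 * T * pb * pc / (C - B) ^ 2)) * (B - A)
      - -T * pb * (-T * pc / (C - B) - -T * pc / (C - A))) / (B - A) ^ 2
      - ((-(S * pb) * pc + -T * (-2 * T * pc * pb / (B - C) ^ 2)) * (C - A)
      - -T * pc * (-T * pb / (B - C) - -T * pb / (B - A))) / (C - A) ^ 2 = 0 := by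
    rw [sub_eq_zero]
    exact heq
  field_simp at h0
  have key : S * (pb * (pc * ((B - C) ^ 6 * ((B - A) ^ 2 * ((C - A) ^ 2 * (C - B)))))) = 0 := by
    linear_combination ((B - C) * (B - A) * (C - A) * (C - B)) * h0
  have hnz : pb * (pc * ((B - C) ^ 6 * ((B - A) ^ 2 * ((C - A) ^ 2 * (C - B))))) ≠ 0 :=
    mul_ne_zero hpb (mul_ne_zero hpc (mul_ne_zero (pow_ne_zero _ hBC)
      (mul_ne_zero (pow_ne_zero _ hBA) (mul_ne_zero (pow_ne_zero _ hCA) hCB))))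
  exact (mul_eq_zero.mp key).resolve_right hnz
end

section
/- With U_k, κ_{ak}, v_a as above (∂_a U_k = κ_{ak} v_a, κ_{a1} = 1, v_a nowhere zero), suppose the net is conjugate: for a ≠ b there exist functions α_{ab}, β_{ab} with ∂_a∂_b U_k = α_{ab} ∂_b U_k + β_{ab} ∂_a U_k for all k. Then for all a ≠ b and all k: ∂_a κ_{bk} = β_{ab}(v_a/v_b)(κ_{ak} − κ_{bk}). In particular the hydrodynamic compatibility condition holds with γ_{ba} = β_{ab} v_a/v_b. -/
/-- Converse direction of the final step of Theorem 1.2 (rank-one case): if the net is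
conjugate, `∂_a∂_b U_k = α_{ab} ∂_b U_k + β_{ab} ∂_a U_k`, then the hydrodynamic
compatibility condition `∂_a κ_{bk} = β_{ab}(v_a/v_b)(κ_{ak} − κ_{bk})` holds. -/
theorem conjugate_net_implies_compatibility {N n : ℕ}
    (V : Set (Fin N → ℝ)) (hV : IsOpen V)
    (U : Fin n → (Fin N → ℝ) → ℝ)
    (v : Fin N → (Fin N → ℝ) → ℝ)
    (κ : Fin N → Fin n → (Fin N → ℝ) → ℝ)
    (α β : Fin N → Fin N → (Fin N → ℝ) → ℝ)
    (k1 : Fin n)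
    (hU : ∀ k, ContDiff ℝ (⊤ : ℕ∞) (U k)) (hv : ∀ a, ContDiff ℝ (⊤ : ℕ∞) (v a))
    (hκs : ∀ a k, ContDiff ℝ (⊤ : ℕ∞) (κ a k))
    (hκ1 : ∀ a, ∀ x ∈ V, κ a k1 x = 1)
    (hvdef : ∀ a, ∀ x ∈ V, v a x = pd a (U k1) x)
    (hvne : ∀ a, ∀ x ∈ V, v a x ≠ 0)
    (hsys : ∀ a k, ∀ x ∈ V, pd a (U k) x = κ a k x * v a x)
    (hconj : ∀ a b, a ≠ b → ∀ k, ∀ x ∈ V,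
      pd a (pd b (U k)) x = α a b x * pd b (U k) x + β a b x * pd a (U k) x) :
    ∀ a b, a ≠ b → ∀ k, ∀ x ∈ V,
      pd a (κ b k) x = β a b x * (v a x / v b x) * (κ a k x - κ b k x) := by
  intro a b hab k x hx
  have hmem := hV.mem_nhds hx
  have hvb : pd a (v b) x = α a b x * v b x + β a b x * v a x := by
    have h1 : v b =ᶠ[nhds x] pd b (U k1) :=
      Filter.eventuallyEq_of_mem hmem (fun y hy => hvdef b y hy)
    have h2 : pd a (v b) x = pd a (pd b (U k1)) x := by
      show fderiv ℝ (v b) x (Pi.single a 1) = fderiv ℝ (pd b (U k1)) x (Pi.single a 1)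
      rw [h1.fderiv_eq]
    rw [h2, hconj a b hab k1 x hx, hsys b k1 x hx, hsys a k1 x hx,
        hκ1 a x hx, hκ1 b x hx]
    ring
  have hdκ : DifferentiableAt ℝ (κ b k) x := ((hκs b k).differentiable (by simp)) x
  have hdv : DifferentiableAt ℝ (v b) x := ((hv b).differentiable (by simp)) x
  have hprod : pd a (pd b (U k)) x
      = pd a (κ b k) x * v b x + κ b k x * pd a (v b) x := by
    have h1 : pd b (U k) =ᶠ[nhds x] (fun y => κ b k y * v b y) :=
      Filter.eventuallyEq_of_mem hmem (fun y hy => hsys b k y hy)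
    show fderiv ℝ (pd b (U k)) x (Pi.single a 1)
      = pd a (κ b k) x * v b x + κ b k x * pd a (v b) x
    rw [h1.fderiv_eq, fderiv_fun_mul hdκ hdv]
    simp only [pd, ContinuousLinearMap.add_apply, ContinuousLinearMap.coe_smul', Pi.smul_apply, smul_eq_mul]
    ring
  have hc := hconj a b hab k x hx
  rw [hprod, hvb, hsys b k x hx, hsys a k x hx] at hc
  have hbne := hvne b x hx
  field_simp
  linear_combination hc
end
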